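/- Let F ⪯ A be a face, β ∈ ℂ^d, and α ∈ ℕA. (a) Suppose neither β nor β−α lies in ℰ^strong_{A,F} := ⋃_{i < d_{A/F}} qdeg H^i(℧•_F). If λ ∈ ℂF satisfies β−λ ∈ ℤ^d and H^i(℧•_F)_{β−λ} ≠ 0 for some i, then H^j(℧•_F)_{β−α−λ} ≠ 0 for some j (that is, E*_F(β) ⊆ E*_F(β−α)). (b) If λ ∈ ℂF satisfies β−λ ∈ ℕA−ℕF, then β+α−λ ∈ ℕA−ℕF (that is, E_F(β) ⊆ E_F(β+α)). -/

import Mathlib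

/-!
Common setup: `A` is a `d × n` integer matrix, given by its columns `a : Fin n → Lat d`,
with `ℤA = ℤ^d` (`SpansZ`) and `ℕA` pointed (`Pointed`).  Faces, semigroups, graded
modules, quasidegree sets, the dualizing complex `ω•_{S_A}` and the Ishida complexes
`℧•_F` are formalized below; all cohomology statements are expressed via the
(ℤ^d-)graded components of these complexes.
-/

namespace GKZ

open scoped Classical

noncomputable section

abbrev Lat (d : ℕ) := Fin d → ℤ
abbrev CS (d : ℕ) := Fin d → ℂ
abbrev Laur (d : ℕ) := AddMonoidAlgebra ℂ (Lat d)

/-- Inclusion ℤ^d ⊆ ℂ^d. -/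
def toC {d : ℕ} (α : Lat d) : CS d := fun i => (α i : ℂ)
/-- Inclusion ℤ^d ⊆ ℝ^d. -/
def toR {d : ℕ} (α : Lat d) : Fin d → ℝ := fun i => (α i : ℝ)
/-- The monomial t^α in the Laurent polynomial ring ℂ[ℤ^d]. -/
def mono {d : ℕ} (α : Lat d) : Laur d := AddMonoidAlgebra.single α 1

variable {d n : ℕ}

/-- The affine semigroup ℕA generated by the columns of `A`. -/
def NA (a : Fin n → Lat d) : AddSubmonoid (Lat d) := AddSubmonoid.closure (Set.range a)

/-- ℕA is pointed: ℕA ∩ (−ℕA) = {0}. -/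
def Pointed (a : Fin n → Lat d) : Prop := ∀ x ∈ NA a, -x ∈ NA a → x = 0

/-- ℤA = ℤ^d. -/
def SpansZ (a : Fin n → Lat d) : Prop :=
  AddSubgroup.closure (Set.range a) = (⊤ : AddSubgroup (Lat d))

/-- The real cone ℝ₊F spanned by the columns indexed by `F`. -/
def cone (a : Fin n → Lat d) (F : Set (Fin n)) : Set (Fin d → ℝ) :=
  { x | ∃ c : Fin n → ℝ, (∀ i, 0 ≤ c i) ∧ (∀ i, i ∉ F → c i = 0) ∧ x = ∑ i, c i • toR (a i) }

/-- `F` is a face of `A`: ℝ₊F is a face of the cone ℝ₊A, and `F` consists of all the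
columns of `A` lying on that face. -/
def IsFace (a : Fin n → Lat d) (F : Set (Fin n)) : Prop :=
  (∀ x y, x ∈ cone a Set.univ → y ∈ cone a Set.univ →
      x + y ∈ cone a F → x ∈ cone a F ∧ y ∈ cone a F) ∧
  (∀ i, toR (a i) ∈ cone a F → i ∈ F)

/-- ℕF. -/
def NFace (a : Fin n → Lat d) (F : Set (Fin n)) : AddSubmonoid (Lat d) :=
  AddSubmonoid.closure (a '' F)

/-- ℤF. -/
def ZFace (a : Fin n → Lat d) (F : Set (Fin n)) : AddSubgroup (Lat d) :=
  AddSubgroup.closure (a '' F)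

/-- ℂF ⊆ ℂ^d. -/
def CFace (a : Fin n → Lat d) (F : Set (Fin n)) : Submodule ℂ (CS d) :=
  Submodule.span ℂ (toC '' (a '' F))

/-- d_F, the rank of ℤF. -/
def dimF (a : Fin n → Lat d) (F : Set (Fin n)) : ℕ :=
  Module.finrank ℤ (Submodule.span ℤ (a '' F))

/-- σ_F, the sum of the columns of F. -/
def sigmaF (a : Fin n → Lat d) (F : Set (Fin n)) : Lat d :=
  ∑ i : Fin n, if i ∈ F then a i else 0

/-- ε_A = a_1 + ⋯ + a_n. -/
def epsA (a : Fin n → Lat d) : Lat d := ∑ i : Fin n, a i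

/-- ℕA − ℕF ⊆ ℤ^d. -/
def NAmNF (a : Fin n → Lat d) (F : Set (Fin n)) : Set (Lat d) :=
  {γ | ∃ u ∈ NA a, ∃ v ∈ NFace a F, γ = u - v}

/-- ℕF − ℕA ⊆ ℤ^d. -/
def NFmNA (a : Fin n → Lat d) (F : Set (Fin n)) : Set (Lat d) :=
  {γ | ∃ u ∈ NFace a F, ∃ v ∈ NA a, γ = u - v}

/-- ℕF − ℕH ⊆ ℤ^d. -/
def NFmNH (a : Fin n → Lat d) (F H : Set (Fin n)) : Set (Lat d) :=
  {γ | ∃ u ∈ NFace a F, ∃ v ∈ NFace a H, γ = u - v}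

/-- ℕA is normal: ℕA = ℤ^d ∩ ℝ₊A. -/
def Normal (a : Fin n → Lat d) : Prop :=
  ∀ γ : Lat d, γ ∈ NA a ↔ toR γ ∈ cone a Set.univ

/-- The Zariski closure of a subset of ℂ^d. -/
def zClosure {d : ℕ} (T : Set (CS d)) : Set (CS d) :=
  {x | ∀ p : MvPolynomial (Fin d) ℂ, (∀ y ∈ T, MvPolynomial.eval y p = 0) →
    MvPolynomial.eval x p = 0}

def IsZClosed {d : ℕ} (Z : Set (CS d)) : Prop := zClosure Z ⊆ Z

/-- Irreducibility of a subset of ℂ^d in the Zariski topology. -/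
def ZIrred {d : ℕ} (Z : Set (CS d)) : Prop :=
  Z.Nonempty ∧ ∀ C₁ C₂ : Set (CS d), IsZClosed C₁ → IsZClosed C₂ →
    Z ⊆ C₁ ∪ C₂ → Z ⊆ C₁ ∨ Z ⊆ C₂

/-- Krull (topological) dimension of a subset of ℂ^d with the Zariski topology:
the Krull dimension of the poset of irreducible Zariski-closed subsets contained in it. -/
def zdim {d : ℕ} (Z : Set (CS d)) : WithBot ℕ∞ :=
  Order.krullDim {C : Set (CS d) // C ⊆ Z ∧ IsZClosed C ∧ ZIrred C}

/-- `Z` is an irreducible component of `W`: a maximal irreducible Zariski-closed subset. -/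
def IsIrredComp {d : ℕ} (Z W : Set (CS d)) : Prop :=
  Z ⊆ W ∧ IsZClosed Z ∧ ZIrred Z ∧
    ∀ Z' : Set (CS d), IsZClosed Z' → ZIrred Z' → Z ⊆ Z' → Z' ⊆ W → Z' = Z

/-- The type of faces of `A`. -/
def FaceT (a : Fin n → Lat d) := {G : Set (Fin n) // IsFace a G}

instance (a : Fin n → Lat d) : Finite (FaceT a) := by
  unfold FaceT; infer_instance

noncomputable instance (a : Fin n → Lat d) : Fintype (FaceT a) := Fintype.ofFinite _

/-- Degree set of the localization M[∂^{−G}] of the monomial module with degree set `E`: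
the set E − ℕG. -/
def locE (a : Fin n → Lat d) (E : Set (Lat d)) (G : Set (Fin n)) : Set (Lat d) :=
  {γ | ∃ f ∈ NFace a G, γ + f ∈ E}

/-- Functions supported on a subset, as a ℂ-submodule of the function space. -/
def funSupported {ι : Type*} (S : Set ι) : Submodule ℂ (ι → ℂ) where
  carrier := {c | ∀ i, i ∉ S → c i = 0}
  add_mem' := by
    intro x y hx hy i hi
    simp only [Set.mem_setOf_eq] at hx hy
    simp [Pi.add_apply, hx i hi, hy i hi]
  zero_mem' := by intro i _; rfl
  smul_mem' := by
    intro r x hx i hi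
    simp only [Set.mem_setOf_eq] at hx
    simp [Pi.smul_apply, hx i hi]

/-- The degree-γ part of the term of the Ishida complex ℧•_F(M) (base face `F`, monomial
module with degree set `E`) whose summands are indexed by the faces of absolute dimension
`j` (cohomological degree `j − d_F`): functions on the faces `G ⊇ F` with `d_G = j` and
`γ ∈ E − ℕG`. -/
def ishChain (a : Fin n → Lat d) (E : Set (Lat d)) (F : Set (Fin n)) (j : ℤ) (γ : Lat d) :
    Submodule ℂ (FaceT a → ℂ) :=
  funSupported {G : FaceT a | F ⊆ G.1 ∧ (dimF a G.1 : ℤ) = j ∧ γ ∈ locE a E G.1}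

/-- The differential of the Ishida complex (in each ℤ^d-degree): the component from a face
`G'` into a face `G''` covering it is `ε G' G''` times the natural localization map. -/
def ishDelta (a : Fin n → Lat d) (ε : Set (Fin n) → Set (Fin n) → ℂ) :
    (FaceT a → ℂ) →ₗ[ℂ] (FaceT a → ℂ) where
  toFun c := fun G'' => ∑ G' : FaceT a,
    if G'.1 ⊆ G''.1 ∧ dimF a G''.1 = dimF a G'.1 + 1 then ε G'.1 G''.1 * c G' else 0
  map_add' x y := by
    funext G''
    simp only [Pi.add_apply, ← Finset.sum_add_distrib]
    refine Finset.sum_congr rfl fun G' _ => ?_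
    by_cases h : G'.1 ⊆ G''.1 ∧ dimF a G''.1 = dimF a G'.1 + 1
    · simp [h, mul_add]
    · simp [h]
  map_smul' r x := by
    funext G''
    simp only [Pi.smul_apply, smul_eq_mul, RingHom.id_apply, Finset.mul_sum]
    refine Finset.sum_congr rfl fun G' _ => ?_
    by_cases h : G'.1 ⊆ G''.1 ∧ dimF a G''.1 = dimF a G'.1 + 1
    · simp only [h, and_self, if_true]; ring
    · simp [h]

/-- Degree-γ cocycles of the Ishida complex at absolute dimension `j`. -/
def ishZ (a : Fin n → Lat d) (E : Set (Lat d)) (ε : Set (Fin n) → Set (Fin n) → ℂ)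
    (F : Set (Fin n)) (j : ℤ) (γ : Lat d) : Submodule ℂ (FaceT a → ℂ) :=
  ishChain a E F j γ ⊓ LinearMap.ker (ishDelta a ε)

/-- Degree-γ coboundaries of the Ishida complex at absolute dimension `j`. -/
def ishB (a : Fin n → Lat d) (E : Set (Lat d)) (ε : Set (Fin n) → Set (Fin n) → ℂ)
    (F : Set (Fin n)) (j : ℤ) (γ : Lat d) : Submodule ℂ (FaceT a → ℂ) :=
  Submodule.map (ishDelta a ε) (ishChain a E F (j - 1) γ)

/-- The degree-γ component of the cohomology of the Ishida complex ℧•_F(M) at absolute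
dimension `j` (cohomological degree `j − d_F`). -/
abbrev ishH (a : Fin n → Lat d) (E : Set (Lat d)) (ε : Set (Fin n) → Set (Fin n) → ℂ)
    (F : Set (Fin n)) (j : ℤ) (γ : Lat d) :=
  ↥(ishZ a E ε F j γ) ⧸
    Submodule.comap (ishZ a E ε F j γ).subtype (ishB a E ε F j γ)

/-- Nonvanishing of the degree-γ component of the cohomology of the Ishida complex. -/
def ishHne (a : Fin n → Lat d) (E : Set (Lat d)) (ε : Set (Fin n) → Set (Fin n) → ℂ)
    (F : Set (Fin n)) (j : ℤ) (γ : Lat d) : Prop :=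
  ¬ (ishZ a E ε F j γ ≤ ishB a E ε F j γ)

/-- Degree-γ part of the term of ω•_{S_A} in cohomological degree `i`:
functions on the faces `G` with `d_{A/G} = i` and `γ ∈ ℕG − ℕA`. -/
def omChain (a : Fin n → Lat d) (i : ℤ) (γ : Lat d) : Submodule ℂ (FaceT a → ℂ) :=
  funSupported {G : FaceT a | (dimF a G.1 : ℤ) = (d : ℤ) - i ∧ γ ∈ NFmNA a G.1}

/-- Degree-γ part of the differential of ω•_{S_A}: the component from a face `G'` to a face
`G''` covered by it is `ε G' G''` times the natural projection ℂ{ℕG'−ℕA} → ℂ{ℕG''−ℕA}. -/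
def omDelta (a : Fin n → Lat d) (ε : Set (Fin n) → Set (Fin n) → ℂ) (γ : Lat d) :
    (FaceT a → ℂ) →ₗ[ℂ] (FaceT a → ℂ) where
  toFun c := fun G'' =>
    if γ ∈ NFmNA a G''.1 then
      ∑ G' : FaceT a,
        if G''.1 ⊆ G'.1 ∧ dimF a G'.1 = dimF a G''.1 + 1 then ε G'.1 G''.1 * c G' else 0
    else 0
  map_add' x y := by
    funext G''
    by_cases hγ : γ ∈ NFmNA a G''.1
    · simp only [Pi.add_apply, hγ, if_true, ← Finset.sum_add_distrib]
      refine Finset.sum_congr rfl fun G' _ => ?_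
      by_cases h : G''.1 ⊆ G'.1 ∧ dimF a G'.1 = dimF a G''.1 + 1
      · simp [h, mul_add]
      · simp [h]
    · simp [hγ]
  map_smul' r x := by
    funext G''
    by_cases hγ : γ ∈ NFmNA a G''.1
    · simp only [Pi.smul_apply, smul_eq_mul, RingHom.id_apply, hγ, if_true, Finset.mul_sum]
      refine Finset.sum_congr rfl fun G' _ => ?_
      by_cases h : G''.1 ⊆ G'.1 ∧ dimF a G'.1 = dimF a G''.1 + 1
      · simp only [h, and_self, if_true]; ring
      · simp [h]
    · simp [hγ]

/-- Degree-γ cocycles of ω•_{S_A} in cohomological degree `i`. -/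
def omZ (a : Fin n → Lat d) (ε : Set (Fin n) → Set (Fin n) → ℂ) (i : ℤ) (γ : Lat d) :
    Submodule ℂ (FaceT a → ℂ) :=
  omChain a i γ ⊓ LinearMap.ker (omDelta a ε γ)

/-- Degree-γ coboundaries of ω•_{S_A} in cohomological degree `i`. -/
def omB (a : Fin n → Lat d) (ε : Set (Fin n) → Set (Fin n) → ℂ) (i : ℤ) (γ : Lat d) :
    Submodule ℂ (FaceT a → ℂ) :=
  Submodule.map (omDelta a ε γ) (omChain a (i - 1) γ)

/-- Nonvanishing of H^i(ω•_{S_A})_γ. -/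
def omHne (a : Fin n → Lat d) (ε : Set (Fin n) → Set (Fin n) → ℂ) (i : ℤ) (γ : Lat d) : Prop :=
  ¬ (omZ a ε i γ ≤ omB a ε i γ)

/-- A ℤ^d-graded S_A-module, presented by its grading together with the (degree-shifting)
action of the monomials t^u, u ∈ ℕA. -/
structure GradedSAMod (a : Fin n → Lat d) (M : Type) [AddCommGroup M] [Module ℂ M] where
  decomp : Lat d → Submodule ℂ M
  internal : DirectSum.IsInternal decomp
  act : (u : Lat d) → u ∈ NA a → (M →ₗ[ℂ] M)
  act_zero : ∀ h0 : (0 : Lat d) ∈ NA a, act 0 h0 = LinearMap.id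
  act_add : ∀ (u : Lat d) (hu : u ∈ NA a) (v : Lat d) (hv : v ∈ NA a) (huv : u + v ∈ NA a),
    act (u + v) huv = (act u hu).comp (act v hv)
  act_grade : ∀ (u : Lat d) (hu : u ∈ NA a) (γ : Lat d), ∀ m ∈ decomp γ,
    act u hu m ∈ decomp (γ + u)

/-- Finite generation over S_A. -/
def GradedSAMod.FGmod {a : Fin n → Lat d} {M : Type} [AddCommGroup M] [Module ℂ M]
    (g : GradedSAMod a M) : Prop :=
  ∃ S : Finset M, ∀ m : M,
    m ∈ Submodule.span ℂ {x | ∃ u, ∃ hu : u ∈ NA a, ∃ s ∈ S, x = g.act u hu s}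

/-- Degrees of nonzero homogeneous elements of `M` that survive in the localization
`M[∂^{−H}]` (i.e. are killed by no power of t^{σ_H}). -/
def GradedSAMod.survTdeg {a : Fin n → Lat d} {M : Type} [AddCommGroup M] [Module ℂ M]
    (g : GradedSAMod a M) (H : Set (Fin n)) : Set (Lat d) :=
  {γ | ∃ m ∈ g.decomp γ, m ≠ 0 ∧ ∀ (k : ℕ) (hk : k • sigmaF a H ∈ NA a), g.act _ hk m ≠ 0}

/-- The quasidegree set of the localization `M[∂^{−H}]` of a finitely generated graded
module `M`: the union over `k` of the Zariski closures of the true degree sets of the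
finitely generated graded submodules t^{−kσ_H}·M of the localization. -/
def GradedSAMod.qdegLoc {a : Fin n → Lat d} {M : Type} [AddCommGroup M] [Module ℂ M]
    (g : GradedSAMod a M) (H : Set (Fin n)) : Set (CS d) :=
  ⋃ k : ℕ, zClosure (toC '' {γ : Lat d | γ + k • sigmaF a H ∈ g.survTdeg H})

/-- A ℂ-submodule is graded: it is spanned by its homogeneous elements. -/
def IsGradedSubC {d : ℕ} {M : Type} [AddCommGroup M] [Module ℂ M]
    (decomp : Lat d → Submodule ℂ M) (N : Submodule ℂ M) : Prop :=
  N = Submodule.span ℂ ((N : Set M) ∩ ⋃ γ : Lat d, (decomp γ : Set M))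

/-- A ℂ-submodule is an S_A-submodule: stable under the monomial action. -/
def IsStableSub {a : Fin n → Lat d} {M : Type} [AddCommGroup M] [Module ℂ M]
    (g : GradedSAMod a M) (N : Submodule ℂ M) : Prop :=
  ∀ (u : Lat d) (hu : u ∈ NA a), ∀ m ∈ N, g.act u hu m ∈ N

/-- The semigroup ring S_A = ℂ[ℕA] as a subalgebra of ℂ[ℤ^d]. -/
def SAlg (a : Fin n → Lat d) : Subalgebra ℂ (Laur d) :=
  Algebra.adjoin ℂ {x | ∃ α ∈ NA a, x = mono α}

/-- The monomial t^u, u ∈ ℕA, as an element of S_A. -/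
def smono (a : Fin n → Lat d) (u : Lat d) (hu : u ∈ NA a) : ↥(SAlg a) :=
  ⟨mono u, Algebra.subset_adjoin ⟨u, hu, rfl⟩⟩

/-- The underlying ℂ-vector space of the monomial module ℂ{E}: finitely supported
functions on `E`. -/
abbrev wMod (d : ℕ) (E : Set (Lat d)) := ↥(Finsupp.supported ℂ ℂ E)

/-- The action of the monomial t^w on ℂ{E}: shift the degree by `w`, truncate back to `E`. -/
def wAct {d : ℕ} (E : Set (Lat d)) (w : Lat d) : wMod d E →ₗ[ℂ] wMod d E :=
  (Finsupp.restrictDom ℂ ℂ E).comp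
    ((Finsupp.lmapDomain ℂ ℂ (fun γ => γ + w)).comp (Finsupp.supported ℂ ℂ E).subtype)

/-- The elements annihilated by some power of the ideal generated by the t^{a_i}, i ∉ F. -/
def torsionAt (a : Fin n → Lat d) (F : Set (Fin n)) {ML : Type} [AddCommGroup ML]
    [Module ℂ ML] (TL : (u : Lat d) → u ∈ NA a → (ML →ₗ[ℂ] ML)) : Set ML :=
  {y | ∃ k : ℕ, ∀ f : Fin k → Fin n, (∀ j, f j ∉ F) →
    ∀ h : (∑ j, a (f j)) ∈ NA a, TL (∑ j, a (f j)) h y = 0}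

/-- The toric ideal I_A ⊆ R_A = ℂ[∂_1,…,∂_n]. -/
def toricIdeal (a : Fin n → Lat d) : Ideal (MvPolynomial (Fin n) ℂ) :=
  RingHom.ker (MvPolynomial.aeval (fun i => mono (a i)) : MvPolynomial (Fin n) ℂ →ₐ[ℂ] Laur d)

/-- The ideal I_F^A = I_A + ⟨∂_i : a_i ∉ F⟩ of R_A. -/
def IFA (a : Fin n → Lat d) (F : Set (Fin n)) : Ideal (MvPolynomial (Fin n) ℂ) :=
  toricIdeal a ⊔ Ideal.span {p | ∃ i, i ∉ F ∧ p = MvPolynomial.X i}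

/-- An R_A-submodule is graded: it is spanned by its homogeneous elements. -/
def IsGradedSubR {d n : ℕ} {M : Type} [AddCommGroup M] [Module ℂ M]
    [Module (MvPolynomial (Fin n) ℂ) M]
    (decomp : Lat d → Submodule ℂ M) (N : Submodule (MvPolynomial (Fin n) ℂ) M) : Prop :=
  N = Submodule.span (MvPolynomial (Fin n) ℂ) ((N : Set M) ∩ ⋃ γ : Lat d, (decomp γ : Set M))

/-- `h` is the primitive integral support function of the facet `G`. -/
def IsPISF (a : Fin n → Lat d) (G : Set (Fin n)) (h : Lat d →ₗ[ℤ] ℤ) : Prop :=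
  (∃ x, h x = 1) ∧ (∀ i, 0 ≤ h (a i)) ∧ (∀ i, h (a i) = 0 ↔ i ∈ G)

/-- The ℂ-linear extension of an integral linear form to ℂ^d. -/
def hC {d : ℕ} (h : Lat d →ₗ[ℤ] ℤ) (β : CS d) : ℂ :=
  ∑ j : Fin d, β j * ((h (Pi.single j 1) : ℤ) : ℂ)


/-! The cohomology of `℧•_F` in a degree `γ` only sees which faces `G ⊇ F` satisfy
`γ ∈ ℕA − ℕG`, so it is invariant under translation by `ℤF`. A polynomial vanishing on
`x + ℤv` vanishes on `x + ℂv`, hence the Zariski closure of its support is invariant under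
translation by `ℂF`: below the top degree, `H(℧•_F)_{β−λ} ≠ 0` would put `β` itself into
`ℰ^strong_{A,F}`. In the top degree `d` all summands come from full-rank faces, whose
localizations are all of `ℂ[ℤ^d]`; so the cocycles are the same in every degree, while the
coboundaries can only grow under multiplication by `t^α`, and nonvanishing passes from `γ`
to `γ − α`. Part (b) holds because `ℕA − ℕF` is stable under adding `ℕA`. -/

open Module in
theorem exists_nsmul_mem_of_finrank_eq {M : Type*} [AddCommGroup M] [Module.Finite ℤ M]
    (N : Submodule ℤ M) (hN : finrank ℤ N = finrank ℤ M) (x : M) :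
    ∃ k : ℕ, 0 < k ∧ k • x ∈ N := by
  have hquot : finrank ℤ (M ⧸ N) = 0 := by
    have := N.finrank_quotient_add_finrank
    omega
  obtain ⟨⟨m, hm⟩, hmx⟩ := (finrank_eq_zero_iff_isTorsion.mp hquot) (x := N.mkQ x)
  have hmx : m • x ∈ N := (Submodule.Quotient.mk_eq_zero N).mp hmx
  refine ⟨m.natAbs, Int.natAbs_pos.mpr (nonZeroDivisors.ne_zero hm), ?_⟩
  rcases Int.natAbs_eq m with h | h
  · rwa [← natCast_zsmul, ← h]
  · rw [← natCast_zsmul, ← neg_neg (m.natAbs : ℤ), ← h, neg_smul]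
    exact neg_mem hmx

theorem eval_add_smul_eq_zero_of_forall_int {d : ℕ}
    (p : MvPolynomial (Fin d) ℂ) (x u : Fin d → ℂ)
    (h : ∀ k : ℤ, MvPolynomial.eval (x + (k : ℂ) • u) p = 0) (t : ℂ) :
    MvPolynomial.eval (x + t • u) p = 0 := by
  set q : Polynomial ℂ := MvPolynomial.aeval
    (fun i => Polynomial.C (x i) + Polynomial.C (u i) * Polynomial.X) p
  have hq : ∀ s : ℂ, q.eval s = MvPolynomial.eval (x + s • u) p := by
    intro s
    rw [← Polynomial.coe_aeval_eq_eval, MvPolynomial.comp_aeval_apply]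
    have hline : (fun i => Polynomial.aeval s
        (Polynomial.C (x i) + Polynomial.C (u i) * Polynomial.X)) = x + s • u := by
      funext i
      simp only [map_add, map_mul, Polynomial.aeval_C, Polynomial.aeval_X,
        Algebra.algebraMap_self, RingHom.id_apply, Pi.add_apply, Pi.smul_apply, smul_eq_mul,
        mul_comm]
    rw [hline, MvPolynomial.aeval_eq_eval]
  have hq0 : q = 0 := Polynomial.eq_zero_of_infinite_isRoot q <|
    Set.infinite_of_injective_forall_mem Int.cast_injective fun k : ℤ => by
      simpa [Polynomial.IsRoot, hq] using h k
  rw [← hq, hq0, Polynomial.eval_zero]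

theorem add_mem_zClosure_of_forall_add_mem {d : ℕ} {T : Set (CS d)} {x μ : CS d}
    (Λ : AddSubgroup (CS d)) (hx : ∀ w ∈ Λ, x + w ∈ T)
    (hμ : μ ∈ Submodule.span ℂ (Λ : Set (CS d))) : x + μ ∈ zClosure T := by
  intro p hp
  let P : CS d → Prop := fun ν => ∀ w ∈ Λ, MvPolynomial.eval (x + ν + w) p = 0
  have hP₀ : P 0 := fun w hw => by simpa using hp _ (hx w hw)
  have hline : ∀ ν, P ν → ∀ (t : ℂ), ∀ v ∈ Λ, P (ν + t • v) := by
    intro ν hν t v hv w hw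
    have hint : ∀ k : ℤ, MvPolynomial.eval (x + ν + w + (k : ℂ) • v) p = 0 := fun k => by
      simpa [Int.cast_smul_eq_zsmul, add_assoc] using
        hν (w + k • v) (add_mem hw (zsmul_mem hv k))
    simpa [add_assoc, add_comm, add_left_comm] using
      eval_add_smul_eq_zero_of_forall_int p _ v hint t
  -- `P` is only stable under translations, so induct on the translation property itself
  have hspan : ∀ ν, P ν → P (ν + μ) := by
    rw [← Submodule.mem_toAddSubmonoid, Submodule.span_eq_closure] at hμ
    induction hμ using AddSubmonoid.closure_induction with
    | mem _ hμ =>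
      obtain ⟨t, -, v, hv, rfl⟩ := hμ
      exact fun ν hν => hline ν hν t v hv
    | zero => simp
    | add μ₁ μ₂ _ _ h₁ h₂ => exact fun ν hν => by simpa [add_assoc] using h₂ _ (h₁ ν hν)
  simpa using hspan 0 hP₀ 0 Λ.zero_mem

def toCHom {d : ℕ} : Lat d →+ CS d where
  toFun := toC
  map_zero' := by funext i; simp [toC]
  map_add' x y := by funext i; simp [toC]

theorem toC_add {d : ℕ} (x y : Lat d) : toC (x + y) = toC x + toC y :=
  map_add toCHom x y

section Faces

variable {d n : ℕ} (a : Fin n → Lat d)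

theorem toC_add_mem_zClosure {F : Set (Fin n)} {γ : Lat d} {S : Set (Lat d)}
    (hS : ∀ w ∈ ZFace a F, γ + w ∈ S) {lam : CS d} (hlam : lam ∈ CFace a F) :
    toC γ + lam ∈ zClosure (toC '' S) := by
  refine add_mem_zClosure_of_forall_add_mem ((ZFace a F).map toCHom) ?_ ?_
  · rintro _ ⟨w, hw, rfl⟩
    exact ⟨γ + w, hS w hw, toC_add γ w⟩
  · refine Submodule.span_mono ?_ hlam
    rintro _ ⟨_, ⟨i, hi, rfl⟩, rfl⟩
    exact ⟨a i, AddSubgroup.subset_closure ⟨i, hi, rfl⟩, rfl⟩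

theorem col_mem_NA (i : Fin n) : a i ∈ NA a :=
  AddSubmonoid.subset_closure ⟨i, rfl⟩

theorem ZFace_mono {F G : Set (Fin n)} (h : F ⊆ G) : ZFace a F ≤ ZFace a G :=
  AddSubgroup.closure_mono (Set.image_mono h)

theorem dimF_le (G : Set (Fin n)) : dimF a G ≤ d := by
  simpa [dimF, Module.finrank_pi] using Submodule.finrank_le (Submodule.span ℤ (a '' G))

theorem add_mem_NAmNF {F : Set (Fin n)} {γ u : Lat d} (hγ : γ ∈ NAmNF a F) (hu : u ∈ NA a) :
    γ + u ∈ NAmNF a F := by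
  obtain ⟨v, hv, f, hf, rfl⟩ := hγ
  exact ⟨v + u, add_mem hv hu, f, hf, by abel⟩

theorem add_mem_locE {G : Set (Fin n)} {γ u : Lat d} (hγ : γ ∈ locE a (NA a) G)
    (hu : u ∈ NA a) : γ + u ∈ locE a (NA a) G := by
  obtain ⟨f, hf, hγf⟩ := hγ
  exact ⟨f, hf, by simpa [add_right_comm] using add_mem hγf hu⟩

theorem add_mem_locE_iff {G : Set (Fin n)} {w : Lat d} (hw : w ∈ ZFace a G) (γ : Lat d) :
    γ + w ∈ locE a (NA a) G ↔ γ ∈ locE a (NA a) G := by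
  induction hw using AddSubgroup.closure_induction generalizing γ with
  | mem _ hw =>
    obtain ⟨i, hi, rfl⟩ := hw
    refine ⟨fun ⟨f, hf, hγf⟩ => ⟨a i + f, ?_, ?_⟩, fun h => add_mem_locE a h (col_mem_NA a i)⟩
    · exact add_mem (AddSubmonoid.subset_closure ⟨i, hi, rfl⟩) hf
    · simpa [add_assoc] using hγf
  | zero => simp
  | add w₁ w₂ _ _ h₁ h₂ => rw [← add_assoc, h₂, h₁]
  | neg w _ h => rw [← h, neg_add_cancel_right]

theorem mem_locE_of_dimF_eq (hZA : SpansZ a) {G : Set (Fin n)} (hG : dimF a G = d)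
    (γ : Lat d) : γ ∈ locE a (NA a) G := by
  have hγ : γ ∈ AddSubgroup.closure (Set.range a) := hZA ▸ AddSubgroup.mem_top γ
  induction hγ using AddSubgroup.closure_induction'' with
  | mem _ hv =>
    obtain ⟨i, rfl⟩ := hv
    exact ⟨0, zero_mem _, by simpa using col_mem_NA a i⟩
  | neg_mem _ hv =>
    obtain ⟨i, rfl⟩ := hv
    -- some multiple `k • a i` lies in `ℤG`, and `-a i + k • a i = (k - 1) • a i ∈ ℕA`
    obtain ⟨k, hk, hkv⟩ := exists_nsmul_mem_of_finrank_eq (Submodule.span ℤ (a '' G))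
      (by rw [← dimF, hG, Module.finrank_pi, Fintype.card_fin]) (a i)
    replace hkv : k • a i ∈ ZFace a G := by
      rwa [ZFace, ← Submodule.span_int_eq_addSubgroupClosure]
    obtain ⟨k, rfl⟩ := Nat.exists_eq_add_one_of_ne_zero hk.ne'
    rw [← add_mem_locE_iff a hkv, succ_nsmul', neg_add_cancel_left]
    exact ⟨0, zero_mem _, by simpa using nsmul_mem (col_mem_NA a i) k⟩
  | zero => exact ⟨0, zero_mem _, by simp⟩
  | add γ₁ γ₂ _ _ h₁ h₂ =>
    obtain ⟨f₁, hf₁, h₁⟩ := h₁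
    obtain ⟨f₂, hf₂, h₂⟩ := h₂
    exact ⟨f₁ + f₂, add_mem hf₁ hf₂, by simpa [add_add_add_comm] using add_mem h₁ h₂⟩

end Faces

section Ishida

variable {d n : ℕ} (a : Fin n → Lat d) {F : Set (Fin n)} {j : ℤ}

theorem ishChain_congr {E : Set (Lat d)} {γ γ' : Lat d}
    (h : ∀ G : FaceT a, F ⊆ G.1 → (dimF a G.1 : ℤ) = j →
      (γ ∈ locE a E G.1 ↔ γ' ∈ locE a E G.1)) :
    ishChain a E F j γ = ishChain a E F j γ' := by
  unfold ishChain
  congr 1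
  ext G
  exact and_congr_right fun hFG => and_congr_right (h G hFG)

theorem ishChain_add_of_mem_ZFace {w : Lat d} (hw : w ∈ ZFace a F) (γ : Lat d) :
    ishChain a (NA a) F j (γ + w) = ishChain a (NA a) F j γ :=
  ishChain_congr a fun _ hFG _ => add_mem_locE_iff a (ZFace_mono a hFG hw) γ

theorem ishHne_add_of_mem_ZFace (ε : Set (Fin n) → Set (Fin n) → ℂ) {w : Lat d}
    (hw : w ∈ ZFace a F) (γ : Lat d) :
    ishHne a (NA a) ε F j (γ + w) ↔ ishHne a (NA a) ε F j γ := by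
  simp only [ishHne, ishZ, ishB, ishChain_add_of_mem_ZFace a hw]

theorem ishChain_sub_le {α : Lat d} (hα : α ∈ NA a) (γ : Lat d) :
    ishChain a (NA a) F j (γ - α) ≤ ishChain a (NA a) F j γ :=
  fun _ hc G hG => hc G fun ⟨hFG, hdim, hloc⟩ =>
    hG ⟨hFG, hdim, by simpa using add_mem_locE a hloc hα⟩

theorem ishChain_top_eq (hZA : SpansZ a) (γ γ' : Lat d) :
    ishChain a (NA a) F d γ = ishChain a (NA a) F d γ' :=
  ishChain_congr a fun G _ hG => by
    simp [mem_locE_of_dimF_eq a hZA (G := G.1) (by exact_mod_cast hG)]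

theorem ishHne_top_sub (hZA : SpansZ a) {α : Lat d} (hα : α ∈ NA a)
    (ε : Set (Fin n) → Set (Fin n) → ℂ) {γ : Lat d} (h : ishHne a (NA a) ε F d γ) :
    ishHne a (NA a) ε F d (γ - α) := by
  have hZ : ishZ a (NA a) ε F d (γ - α) = ishZ a (NA a) ε F d γ := by
    rw [ishZ, ishZ, ishChain_top_eq a hZA]
  have hB : ishB a (NA a) ε F d (γ - α) ≤ ishB a (NA a) ε F d γ :=
    Submodule.map_mono (ishChain_sub_le a hα γ)
  exact fun hle => h (hZ ▸ hle.trans hB)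

theorem not_ishHne_of_lt (E : Set (Lat d)) (ε : Set (Fin n) → Set (Fin n) → ℂ)
    (hj : (d : ℤ) < j) (γ : Lat d) : ¬ ishHne a E ε F j γ := by
  refine not_not_intro fun z hz => ?_
  have hz₀ : z = 0 := funext fun G => hz.1 G fun ⟨_, hdim, _⟩ => by
    have := dimF_le a G.1
    omega
  exact hz₀ ▸ zero_mem _

end Ishida

theorem EFstar_and_EF_stability_general
    {d n : ℕ} (a : Fin n → Lat d)
    (hZA : SpansZ a)
    (F : Set (Fin n))
    (β : CS d) (α : Lat d) (hα : α ∈ NA a)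
    (ε : Set (Fin n) → Set (Fin n) → ℂ) :
    ((β ∉ ⋃ (i : ℕ) (_ : dimF a F + i < d), zClosure (toC '' {γ : Lat d |
        ishHne a (NA a : Set (Lat d)) ε F ((dimF a F : ℤ) + (i : ℤ)) γ})) →
      (β - toC α ∉ ⋃ (i : ℕ) (_ : dimF a F + i < d), zClosure (toC '' {γ : Lat d |
        ishHne a (NA a : Set (Lat d)) ε F ((dimF a F : ℤ) + (i : ℤ)) γ})) →
      ∀ lam ∈ CFace a F, ∀ γ : Lat d, toC γ = β - lam →
        (∃ i : ℕ, ishHne a (NA a : Set (Lat d)) ε F ((dimF a F : ℤ) + (i : ℤ)) γ) →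
        ∃ j : ℕ, ishHne a (NA a : Set (Lat d)) ε F ((dimF a F : ℤ) + (j : ℤ)) (γ - α)) ∧
    (∀ lam ∈ CFace a F, (∃ γ ∈ NAmNF a F, toC γ = β - lam) →
      ∃ γ' ∈ NAmNF a F, toC γ' = β + toC α - lam) := by
  refine ⟨fun hβ _ lam hlam γ hγ ⟨i, hi⟩ => ?_, fun lam _ ⟨γ, hγ, hγβ⟩ => ?_⟩
  · rcases lt_trichotomy (dimF a F + i) d with hlt | heq | hgt
    · refine absurd (Set.mem_iUnion₂.2 ⟨i, hlt, ?_⟩) hβ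
      rw [← sub_add_cancel β lam, ← hγ]
      exact toC_add_mem_zClosure a (fun w hw => (ishHne_add_of_mem_ZFace a ε hw γ).2 hi) hlam
    · have htop : (dimF a F : ℤ) + i = d := by exact_mod_cast heq
      exact ⟨i, htop ▸ ishHne_top_sub a hZA hα ε (htop ▸ hi)⟩
    · exact absurd hi (not_ishHne_of_lt a _ ε (by exact_mod_cast hgt) γ)
  · exact ⟨γ + α, add_mem_NAmNF a hγ hα, by rw [toC_add, hγβ]; abel⟩

/-- Let `F ⪯ A`, `β ∈ ℂ^d`, `α ∈ ℕA`.
(a) If neither `β` nor `β − α` lies in ℰ^strong_{A,F} = ⋃_{i<d_{A/F}} qdeg H^i(℧•_F) and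
`λ ∈ ℂF` satisfies `β − λ ∈ ℤ^d` and `H^i(℧•_F)_{β−λ} ≠ 0` for some `i`, then
`H^j(℧•_F)_{β−α−λ} ≠ 0` for some `j`  (E*_F(β) ⊆ E*_F(β−α)).
(b) If `λ ∈ ℂF` satisfies `β − λ ∈ ℕA − ℕF`, then `β + α − λ ∈ ℕA − ℕF`
(E_F(β) ⊆ E_F(β+α)). -/
theorem EFstar_and_EF_stability
    {d n : ℕ} (hd : 0 < d) (hn : 0 < n) (a : Fin n → Lat d)
    (hZA : SpansZ a) (hPt : Pointed a)
    (F : Set (Fin n)) (hF : IsFace a F)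
    (β : CS d) (α : Lat d) (hα : α ∈ NA a)
    (ε : Set (Fin n) → Set (Fin n) → ℂ)
    (hval : ∀ G' G'' : FaceT a, G'.1 ⊆ G''.1 → dimF a G''.1 = dimF a G'.1 + 1 →
      ε G'.1 G''.1 = 1 ∨ ε G'.1 G''.1 = -1)
    (hsq : ∀ (γ : Lat d) (j : ℤ) (c : FaceT a → ℂ),
      c ∈ ishChain a (NA a : Set (Lat d)) F j γ → ishDelta a ε (ishDelta a ε c) = 0) :
    ((β ∉ ⋃ (i : ℕ) (_ : dimF a F + i < d), zClosure (toC '' {γ : Lat d |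
        ishHne a (NA a : Set (Lat d)) ε F ((dimF a F : ℤ) + (i : ℤ)) γ})) →
      (β - toC α ∉ ⋃ (i : ℕ) (_ : dimF a F + i < d), zClosure (toC '' {γ : Lat d |
        ishHne a (NA a : Set (Lat d)) ε F ((dimF a F : ℤ) + (i : ℤ)) γ})) →
      ∀ lam ∈ CFace a F, ∀ γ : Lat d, toC γ = β - lam →
        (∃ i : ℕ, ishHne a (NA a : Set (Lat d)) ε F ((dimF a F : ℤ) + (i : ℤ)) γ) →
        ∃ j : ℕ, ishHne a (NA a : Set (Lat d)) ε F ((dimF a F : ℤ) + (j : ℤ)) (γ - α)) ∧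
    (∀ lam ∈ CFace a F, (∃ γ ∈ NAmNF a F, toC γ = β - lam) →
      ∃ γ' ∈ NAmNF a F, toC γ' = β + toC α - lam) :=
  EFstar_and_EF_stability_general a hZA F β α hα ε

end

end GKZ
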